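/- arXiv:1908.09098 — 5 statements merged into one kernel-verified Lean document; each statement's English description precedes it below -/
import Mathlib

section
/- Let 0 < K₂ ≤ K₁ be real numbers. Let A be a real 2×2 matrix with singular value decomposition A = U · diag(σ₁, σ₂) · Vᵀ, where U and V are orthogonal 2×2 matrices and σ₁ ≥ σ₂ ≥ 0, and assume K₂ ≤ σ₁ and σ₂ ≤ K₁. Define M* = U · diag(min(σ₁, K₁), max(σ₂, K₂)) · Vᵀ. Then for every real 2×2 matrix M satisfying K₂·‖x‖ ≤ ‖M x‖ ≤ K₁·‖x‖ for all x ∈ ℝ², one has ‖M* − A‖_F ≤ ‖M − A‖_F. -/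
/-!
Conjugating by the orthogonal matrices `U` and `V` preserves the Frobenius norm; it turns `A`
into `diag(σ₁, σ₂)`, `M⋆` into the clamped diagonal matrix, and `M` into `N = Uᵀ M V`, whose
`j`-th column `Uᵀ M vⱼ` has length in `[K₂, K₁]`. The claim then splits column by column, and
each column is the reverse triangle inequality: the distance from `σⱼ eⱼ` to a vector of length at
most `K₁` (resp. at least `K₂`) is at least `σ₁ - K₁` (resp. `K₂ - σ₂`) when that is positive,
using `‖σ₁ e₁‖ ≥ σ₁` (resp. `‖σ₂ e₂‖ = σ₂`, as `σ₂ ≥ 0`).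
-/

open Matrix

/-- Frobenius norm of a real 2×2 matrix. -/
noncomputable def frob2 (B : Matrix (Fin 2) (Fin 2) ℝ) : ℝ :=
  Real.sqrt (∑ i : Fin 2, ∑ j : Fin 2, (B i j) ^ 2)

/-- Euclidean norm on ℝ². -/
noncomputable def euclNorm2 (x : Fin 2 → ℝ) : ℝ :=
  Real.sqrt (x 0 ^ 2 + x 1 ^ 2)

open WithLp

theorem Matrix.col_sub {m n α : Type*} [Sub α] (A B : Matrix m n α) (j : n) :
    (A - B).col j = A.col j - B.col j :=
  rfl

section Orthogonal

variable {m n : Type*} [Fintype m] [Fintype n]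

theorem sum_sum_sq_eq_trace_mul_transpose (B : Matrix m n ℝ) :
    ∑ i, ∑ j, B i j ^ 2 = trace (B * Bᵀ) := by
  simp [trace, mul_apply, sq]

theorem trace_mul_transpose_orthogonal_conj [DecidableEq m] [DecidableEq n] {U : Matrix m m ℝ}
    {V : Matrix n n ℝ} (hU : Uᵀ * U = 1) (hV : Vᵀ * V = 1) (B : Matrix m n ℝ) :
    trace (Uᵀ * B * V * (Uᵀ * B * V)ᵀ) = trace (B * Bᵀ) := by
  have hVV : V * Vᵀ = 1 := mul_eq_one_comm.mp hV
  have hUU : U * Uᵀ = 1 := mul_eq_one_comm.mp hU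
  calc trace (Uᵀ * B * V * (Uᵀ * B * V)ᵀ) = trace (Uᵀ * (B * (V * Vᵀ) * Bᵀ * U)) := by
        simp only [transpose_mul, transpose_transpose, Matrix.mul_assoc]
    _ = trace (B * Bᵀ * U * Uᵀ) := by rw [hVV, Matrix.mul_one, trace_mul_comm]
    _ = trace (B * Bᵀ) := by rw [Matrix.mul_assoc, hUU, Matrix.mul_one]

theorem norm_toLp_mulVec_of_transpose_mul_eq_one [DecidableEq n] {W : Matrix m n ℝ}
    (hW : Wᵀ * W = 1) (x : n → ℝ) : ‖toLp 2 (W *ᵥ x)‖ = ‖toLp 2 x‖ := by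
  have h : (W *ᵥ x) ⬝ᵥ (W *ᵥ x) = x ⬝ᵥ x := by
    rw [dotProduct_mulVec, ← mulVec_transpose, mulVec_mulVec, hW, one_mulVec, dotProduct_comm]
  rw [← sq_eq_sq₀ (norm_nonneg _) (norm_nonneg _), EuclideanSpace.real_norm_sq_eq,
    EuclideanSpace.real_norm_sq_eq]
  simpa [dotProduct, sq] using h

theorem norm_toLp_col_orthogonal_conj [DecidableEq m] {p : Type*} [Fintype p] [DecidableEq p]
    {U : Matrix m m ℝ} (hU : U * Uᵀ = 1) (M : Matrix m n ℝ) (V : Matrix n p ℝ) (j : p) :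
    ‖toLp 2 ((Uᵀ * M * V).col j)‖ = ‖toLp 2 (M *ᵥ V.col j)‖ := by
  rw [← mulVec_single_one, ← mulVec_single_one, ← mulVec_mulVec, ← mulVec_mulVec,
    norm_toLp_mulVec_of_transpose_mul_eq_one (by rwa [transpose_transpose])]

end Orthogonal

section Clamp

variable {E : Type*} [SeminormedAddCommGroup E] {x y : E} {σ K : ℝ}

theorem abs_min_sub_le_norm_sub (hx : ‖x‖ ≤ K) (hy : σ ≤ ‖y‖) : |min σ K - σ| ≤ ‖x - y‖ := by
  rcases le_total σ K with h | h
  · simp [min_eq_left h]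
  · rw [min_eq_right h, abs_of_nonpos (by linarith), norm_sub_rev]
    linarith [norm_sub_norm_le y x]

theorem abs_max_sub_le_norm_sub (hx : K ≤ ‖x‖) (hy : ‖y‖ ≤ σ) : |max σ K - σ| ≤ ‖x - y‖ := by
  rcases le_total K σ with h | h
  · simp [max_eq_left h]
  · rw [max_eq_right h, abs_of_nonneg (by linarith)]
    linarith [norm_sub_norm_le x y]

end Clamp

theorem euclNorm2_eq_norm (x : Fin 2 → ℝ) : euclNorm2 x = ‖toLp 2 x‖ := by
  simp [euclNorm2, EuclideanSpace.norm_eq, Fin.sum_univ_two]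

theorem frob2_eq_sqrt_norm_col (B : Matrix (Fin 2) (Fin 2) ℝ) :
    frob2 B = √(‖toLp 2 (B.col 0)‖ ^ 2 + ‖toLp 2 (B.col 1)‖ ^ 2) := by
  simp only [frob2, EuclideanSpace.real_norm_sq_eq, Fin.sum_univ_two, col_apply]
  ring_nf

theorem frob2_orthogonal_conj {U V : Matrix (Fin 2) (Fin 2) ℝ} (hU : Uᵀ * U = 1)
    (hV : Vᵀ * V = 1) (B : Matrix (Fin 2) (Fin 2) ℝ) : frob2 (Uᵀ * B * V) = frob2 B := by
  rw [frob2, frob2, sum_sum_sq_eq_trace_mul_transpose, sum_sum_sq_eq_trace_mul_transpose,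
    trace_mul_transpose_orthogonal_conj hU hV]

theorem stmt0_general (K₁ K₂ σ₁ σ₂ : ℝ) (hσ₂ : 0 ≤ σ₂)
    (U V A : Matrix (Fin 2) (Fin 2) ℝ)
    (hU : Uᵀ * U = 1) (hV : Vᵀ * V = 1)
    (hA : A = U * Matrix.diagonal ![σ₁, σ₂] * Vᵀ)
    (Mstar : Matrix (Fin 2) (Fin 2) ℝ)
    (hMstar : Mstar = U * Matrix.diagonal ![min σ₁ K₁, max σ₂ K₂] * Vᵀ) :
    ∀ M : Matrix (Fin 2) (Fin 2) ℝ,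
      (∀ x : Fin 2 → ℝ,
        K₂ * euclNorm2 x ≤ euclNorm2 (M.mulVec x) ∧
        euclNorm2 (M.mulVec x) ≤ K₁ * euclNorm2 x) →
      frob2 (Mstar - A) ≤ frob2 (M - A) := by
  intro M hM
  have hcancel (D : Matrix (Fin 2) (Fin 2) ℝ) : Uᵀ * (U * D * Vᵀ) * V = D := by
    rw [← Matrix.mul_assoc, ← Matrix.mul_assoc, hU, Matrix.one_mul, Matrix.mul_assoc, hV,
      Matrix.mul_one]
  set N := Uᵀ * M * V
  have hcol (j : Fin 2) : K₂ ≤ ‖toLp 2 (N.col j)‖ ∧ ‖toLp 2 (N.col j)‖ ≤ K₁ := by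
    have hv : ‖toLp 2 (V.col j)‖ = 1 := by
      rw [← mulVec_single_one, norm_toLp_mulVec_of_transpose_mul_eq_one hV, PiLp.toLp_single,
        PiLp.norm_single, norm_one]
    simpa only [euclNorm2_eq_norm, hv, mul_one,
      ← norm_toLp_col_orthogonal_conj (mul_eq_one_comm.mp hU)] using hM (V.col j)
  have hMA : Uᵀ * (M - A) * V = N - diagonal ![σ₁, σ₂] := by
    rw [Matrix.mul_sub, Matrix.sub_mul, hA, hcancel]
  have hMstarA : Uᵀ * (Mstar - A) * V = diagonal ![min σ₁ K₁ - σ₁, max σ₂ K₂ - σ₂] := by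
    rw [Matrix.mul_sub, Matrix.sub_mul, hA, hMstar, hcancel, hcancel, diagonal_sub]
    simp
  rw [← frob2_orthogonal_conj hU hV (M - A), ← frob2_orthogonal_conj hU hV (Mstar - A), hMA,
    hMstarA, frob2_eq_sqrt_norm_col, frob2_eq_sqrt_norm_col]
  simp only [col_sub, col_diagonal, PiLp.toLp_single, toLp_sub, PiLp.norm_single,
    Real.norm_eq_abs, cons_val_zero, cons_val_one]
  gcongr
  · exact abs_min_sub_le_norm_sub (hcol 0).2 (by simpa using le_abs_self σ₁)
  · exact abs_max_sub_le_norm_sub (hcol 1).1 (by simpa using (abs_of_nonneg hσ₂).le)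

/-- Projection onto matrices with singular values bounded in `[K₂, K₁]`:
optimality of clamping the singular values. -/
theorem stmt0 (K₁ K₂ σ₁ σ₂ : ℝ) (hK₂ : 0 < K₂) (hK : K₂ ≤ K₁)
    (hσ : σ₂ ≤ σ₁) (hσ₂ : 0 ≤ σ₂) (hKσ₁ : K₂ ≤ σ₁) (hσ₂K : σ₂ ≤ K₁)
    (U V A : Matrix (Fin 2) (Fin 2) ℝ)
    (hU : Uᵀ * U = 1) (hV : Vᵀ * V = 1)
    (hA : A = U * Matrix.diagonal ![σ₁, σ₂] * Vᵀ)
    (Mstar : Matrix (Fin 2) (Fin 2) ℝ)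
    (hMstar : Mstar = U * Matrix.diagonal ![min σ₁ K₁, max σ₂ K₂] * Vᵀ) :
    ∀ M : Matrix (Fin 2) (Fin 2) ℝ,
      (∀ x : Fin 2 → ℝ,
        K₂ * euclNorm2 x ≤ euclNorm2 (M.mulVec x) ∧
        euclNorm2 (M.mulVec x) ≤ K₁ * euclNorm2 x) →
      frob2 (Mstar - A) ≤ frob2 (M - A) :=
  stmt0_general K₁ K₂ σ₁ σ₂ hσ₂ U V A hU hV hA Mstar hMstar
end

section
/- (von Neumann-type trace inequality, used in the Procrustes argument) Let n ≥ 1 and let A = U₁ D₁ V₁ᵀ and B = U₂ D₂ V₂ᵀ be real n×n matrices, where U₁, V₁, U₂, V₂ are orthogonal and D₁ = diag(a₁, …, aₙ), D₂ = diag(b₁, …, bₙ) are diagonal with a₁ ≥ a₂ ≥ … ≥ aₙ ≥ 0 and b₁ ≥ b₂ ≥ … ≥ bₙ ≥ 0. Then trace(Aᵀ B) ≤ Σᵢ aᵢ bᵢ. -/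
/-!
Writing `P = U₁ᵀ U₂` and `Q = V₂ᵀ V₁` (both orthogonal), cyclicity of the trace gives
`trace (Aᵀ B) = ∑ᵢⱼ aᵢ bⱼ Pᵢⱼ Qⱼᵢ`. Since `aᵢ bⱼ ≥ 0`, AM-GM bounds `2 Pᵢⱼ Qⱼᵢ` by `Pᵢⱼ² + Qⱼᵢ²`,
and the squared entries of an orthogonal matrix form a doubly stochastic matrix. By Birkhoff's
theorem a doubly stochastic matrix is a convex combination of permutation matrices, and on each
of them the rearrangement inequality gives `∑ᵢ aᵢ b_{σ i} ≤ ∑ᵢ aᵢ bᵢ` for similarly ordered `a, b`.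
-/

open Matrix

namespace Matrix

variable {n R : Type*} [Fintype n] [DecidableEq n]

theorem trace_diagonal_mul_mul_diagonal_mul [CommRing R] (a b : n → R) (P Q : Matrix n n R) :
    trace (diagonal a * P * diagonal b * Q) = ∑ i, ∑ j, a i * b j * (P i j * Q j i) := by
  simp only [trace, diag_apply, mul_apply (M := diagonal a * P * diagonal b), mul_diagonal,
    diagonal_mul]
  refine Finset.sum_congr rfl fun i _ => Finset.sum_congr rfl fun j _ => ?_
  ring

theorem trace_transpose_mul_eq_trace_diagonal_mul_diagonal [CommRing R]
    (U₁ V₁ U₂ V₂ : Matrix n n R) (a b : n → R) :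
    trace ((U₁ * diagonal a * V₁ᵀ)ᵀ * (U₂ * diagonal b * V₂ᵀ)) =
      trace (diagonal a * (U₁ᵀ * U₂) * diagonal b * (V₂ᵀ * V₁)) := by
  simp only [transpose_mul, transpose_transpose, diagonal_transpose, Matrix.mul_assoc]
  rw [trace_mul_comm]
  simp only [Matrix.mul_assoc]

theorem transpose_mem_orthogonalGroup [CommRing R] {A : Matrix n n R}
    (hA : A ∈ orthogonalGroup n R) : Aᵀ ∈ orthogonalGroup n R := by
  rw [mem_orthogonalGroup_iff', transpose_transpose]
  exact (mem_orthogonalGroup_iff n R).1 hA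

theorem hadamard_self_mem_doublyStochastic [CommRing R] [LinearOrder R] [IsStrictOrderedRing R]
    {A : Matrix n n R} (hA : A ∈ orthogonalGroup n R) : A ⊙ A ∈ doublyStochastic R n := by
  have hrow := (mem_orthogonalGroup_iff n R).1 hA
  have hcol := (mem_orthogonalGroup_iff' n R).1 hA
  refine mem_doublyStochastic_iff_sum.2
    ⟨fun i j => mul_self_nonneg (A i j), fun i => ?_, fun j => ?_⟩
  · simpa [mul_apply] using congrFun (congrFun hrow i) i
  · simpa [mul_apply] using congrFun (congrFun hcol j) j

section LinearOrderedField

variable [Field R] [LinearOrder R] [IsStrictOrderedRing R]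

theorem dotProduct_mulVec_le_of_mem_doublyStochastic {M : Matrix n n R}
    (hM : M ∈ doublyStochastic R n) {a b : n → R} (hab : Monovary a b) :
    a ⬝ᵥ (M *ᵥ b) ≤ a ⬝ᵥ b := by
  obtain ⟨w, hw_nonneg, hw_sum, rfl⟩ := exists_eq_sum_perm_of_mem_doublyStochastic hM
  simp only [sum_mulVec, smul_mulVec, permMatrix_mulVec, dotProduct_sum, dotProduct_smul]
  calc ∑ σ, w σ • (a ⬝ᵥ (b ∘ σ)) ≤ ∑ σ, w σ • (a ⬝ᵥ b) :=
        Finset.sum_le_sum fun σ _ => smul_le_smul_of_nonneg_left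
          (by simpa only [dotProduct, Function.comp_apply, smul_eq_mul]
            using hab.sum_smul_comp_perm_le_sum_smul)
          (hw_nonneg σ)
    _ = a ⬝ᵥ b := by rw [← Finset.sum_smul, hw_sum, one_smul]

theorem sum_mul_mul_apply_mul_apply_le_dotProduct {P Q : Matrix n n R}
    (hP : P ∈ orthogonalGroup n R) (hQ : Q ∈ orthogonalGroup n R) {a b : n → R}
    (ha : 0 ≤ a) (hb : 0 ≤ b) (hab : Monovary a b) :
    ∑ i, ∑ j, a i * b j * (P i j * Q j i) ≤ a ⬝ᵥ b := by
  have hsplit : a ⬝ᵥ ((P ⊙ P) *ᵥ b) + a ⬝ᵥ ((Q ⊙ Q)ᵀ *ᵥ b) =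
      ∑ i, ∑ j, a i * b j * (P i j ^ 2 + Q j i ^ 2) := by
    simp only [dotProduct, mulVec, ← Finset.sum_add_distrib, Finset.mul_sum]
    refine Finset.sum_congr rfl fun i _ => Finset.sum_congr rfl fun j _ => ?_
    simp only [hadamard_apply, transpose_apply]
    ring
  have hamgm : 2 * ∑ i, ∑ j, a i * b j * (P i j * Q j i) ≤
      ∑ i, ∑ j, a i * b j * (P i j ^ 2 + Q j i ^ 2) := by
    simp only [Finset.mul_sum]
    refine Finset.sum_le_sum fun i _ => Finset.sum_le_sum fun j _ => ?_
    have := mul_le_mul_of_nonneg_left (two_mul_le_add_sq (P i j) (Q j i))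
      (mul_nonneg (ha i) (hb j))
    linarith
  have := dotProduct_mulVec_le_of_mem_doublyStochastic (hadamard_self_mem_doublyStochastic hP) hab
  have := dotProduct_mulVec_le_of_mem_doublyStochastic
    (transpose_mem_doublyStochastic_iff.2 (hadamard_self_mem_doublyStochastic hQ)) hab
  linarith

end LinearOrderedField

end Matrix

theorem stmt2_general (n : ℕ)
    (U₁ V₁ U₂ V₂ A B : Matrix (Fin n) (Fin n) ℝ)
    (hU₁ : U₁ᵀ * U₁ = 1) (hV₁ : V₁ᵀ * V₁ = 1)
    (hU₂ : U₂ᵀ * U₂ = 1) (hV₂ : V₂ᵀ * V₂ = 1)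
    (a b : Fin n → ℝ)
    (ha_mono : ∀ i j : Fin n, i ≤ j → a j ≤ a i)
    (hb_mono : ∀ i j : Fin n, i ≤ j → b j ≤ b i)
    (ha_nonneg : ∀ i, 0 ≤ a i) (hb_nonneg : ∀ i, 0 ≤ b i)
    (hA : A = U₁ * Matrix.diagonal a * V₁ᵀ)
    (hB : B = U₂ * Matrix.diagonal b * V₂ᵀ) :
    Matrix.trace (Aᵀ * B) ≤ ∑ i, a i * b i := by
  have orth {W : Matrix (Fin n) (Fin n) ℝ} (hW : Wᵀ * W = 1) : W ∈ orthogonalGroup (Fin n) ℝ :=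
    (mem_orthogonalGroup_iff' _ _).2 hW
  have hP := mul_mem (transpose_mem_orthogonalGroup (orth hU₁)) (orth hU₂)
  have hQ := mul_mem (transpose_mem_orthogonalGroup (orth hV₂)) (orth hV₁)
  have hab : Monovary a b := Antitone.monovary ha_mono hb_mono
  rw [hA, hB, trace_transpose_mul_eq_trace_diagonal_mul_diagonal,
    trace_diagonal_mul_mul_diagonal_mul]
  exact sum_mul_mul_apply_mul_apply_le_dotProduct hP hQ ha_nonneg hb_nonneg hab

/-- von Neumann-type trace inequality: if `A = U₁ D₁ V₁ᵀ` and `B = U₂ D₂ V₂ᵀ`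
with `U₁, V₁, U₂, V₂` orthogonal and `D₁ = diag(a)`, `D₂ = diag(b)` having
nonincreasing nonnegative diagonal entries, then `trace(Aᵀ B) ≤ Σᵢ aᵢ bᵢ`. -/
theorem stmt2 (n : ℕ) (hn : 1 ≤ n)
    (U₁ V₁ U₂ V₂ A B : Matrix (Fin n) (Fin n) ℝ)
    (hU₁ : U₁ᵀ * U₁ = 1) (hV₁ : V₁ᵀ * V₁ = 1)
    (hU₂ : U₂ᵀ * U₂ = 1) (hV₂ : V₂ᵀ * V₂ = 1)
    (a b : Fin n → ℝ)
    (ha_mono : ∀ i j : Fin n, i ≤ j → a j ≤ a i)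
    (hb_mono : ∀ i j : Fin n, i ≤ j → b j ≤ b i)
    (ha_nonneg : ∀ i, 0 ≤ a i) (hb_nonneg : ∀ i, 0 ≤ b i)
    (hA : A = U₁ * Matrix.diagonal a * V₁ᵀ)
    (hB : B = U₂ * Matrix.diagonal b * V₂ᵀ) :
    Matrix.trace (Aᵀ * B) ≤ ∑ i, a i * b i :=
  stmt2_general n U₁ V₁ U₂ V₂ A B hU₁ hV₁ hU₂ hV₂ a b ha_mono hb_mono ha_nonneg hb_nonneg hA hB
end

section
/- (Key inequality in the proof of the projection theorem) Let n ≥ 1, let D = diag(d₁, …, dₙ) and Σ = diag(s₁, …, sₙ) be real diagonal n×n matrices with d₁ ≥ … ≥ dₙ ≥ 0 and s₁ ≥ … ≥ sₙ ≥ 0, and let Q₁, Q₂ be orthogonal n×n matrices. Then ‖D − Q₁ᵀ Σ Q₂‖_F ≥ ‖D − Σ‖_F. -/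
open Matrix

noncomputable def frobN {n : ℕ} (B : Matrix (Fin n) (Fin n) ℝ) : ℝ :=
  Real.sqrt (∑ i : Fin n, ∑ j : Fin n, (B i j) ^ 2)

/-!
Expanding the squares, and using that `‖Q₁ᵀ Σ Q₂‖_F = ‖Σ‖_F`, the claim reduces to
`∑ᵢ dᵢ (Q₁ᵀ Σ Q₂)ᵢᵢ ≤ ∑ᵢ dᵢ sᵢ`. The left side is `∑ᵢₖ dᵢ sₖ Q₁ₖᵢ Q₂ₖᵢ`, and by AM-GM it is at
most the average of `∑ᵢₖ dᵢ sₖ Mᵢₖ` over the two matrices `Mᵢₖ = Q₁ₖᵢ²` and `Mᵢₖ = Q₂ₖᵢ²`,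
both doubly stochastic. By Birkhoff's theorem this linear functional of `M` is maximised at a
permutation matrix, where the bound is the rearrangement inequality.
-/

open Finset

section
variable {ι : Type*} [Fintype ι] [DecidableEq ι]

theorem Monovary.sum_mul_mul_le_sum_mul_of_mem_doublyStochastic {d s : ι → ℝ}
    (hds : Monovary d s) {M : Matrix ι ι ℝ} (hM : M ∈ doublyStochastic ℝ ι) :
    ∑ i, ∑ j, d i * s j * M i j ≤ ∑ i, d i * s i := by
  rw [← SetLike.mem_coe, doublyStochastic_eq_convexHull_permMatrix] at hM
  refine convexHull_min ?_ (convex_halfSpace_le (𝕜 := ℝ)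
    (f := fun M : Matrix ι ι ℝ => ∑ i, ∑ j, d i * s j * M i j) ?_ _) hM
  · rintro _ ⟨σ, rfl⟩
    simpa [PEquiv.toMatrix_apply, eq_comm] using hds.sum_mul_comp_perm_le_sum_mul (σ := σ)
  · constructor
    · intro A B
      simp only [Matrix.add_apply, mul_add, sum_add_distrib]
    · intro c A
      simp only [Matrix.smul_apply, smul_eq_mul, mul_sum]
      exact sum_congr rfl fun i _ => sum_congr rfl fun j _ => by ring

theorem map_sq_mem_doublyStochastic {U : Matrix ι ι ℝ} (hU : Uᵀ * U = 1) :
    U.map (· ^ 2) ∈ doublyStochastic ℝ ι := by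
  have hU' : U * Uᵀ = 1 := mul_eq_one_comm.mp hU
  refine mem_doublyStochastic_iff_sum.mpr ⟨fun i j => sq_nonneg _, fun i => ?_, fun j => ?_⟩
  · simpa [mul_apply, sq] using congr_fun (congr_fun hU' i) i
  · simpa [mul_apply, sq] using congr_fun (congr_fun hU j) j

theorem Monovary.sum_mul_diag_transpose_mul_diagonal_mul_le {d s : ι → ℝ} (hds : Monovary d s)
    (hd : 0 ≤ d) (hs : 0 ≤ s) {U V : Matrix ι ι ℝ} (hU : Uᵀ * U = 1) (hV : Vᵀ * V = 1) :
    ∑ i, d i * (Uᵀ * diagonal s * V) i i ≤ ∑ i, d i * s i := by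
  have hU2 := transpose_mem_doublyStochastic_iff.mpr (map_sq_mem_doublyStochastic hU)
  have hV2 := transpose_mem_doublyStochastic_iff.mpr (map_sq_mem_doublyStochastic hV)
  calc ∑ i, d i * (Uᵀ * diagonal s * V) i i
      = ∑ i, ∑ k, d i * s k * (U k i * V k i) := by
        simp only [mul_apply, transpose_apply, diagonal_apply, mul_ite, mul_zero, sum_ite_eq',
          mem_univ, if_true, mul_sum]
        exact sum_congr rfl fun i _ => sum_congr rfl fun k _ => by ring
    _ ≤ ∑ i, ∑ k, d i * s k * ((U k i ^ 2 + V k i ^ 2) / 2) := by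
        gcongr with i _ k _
        · exact mul_nonneg (hd i) (hs k)
        · nlinarith [sq_nonneg (U k i - V k i)]
    _ = (∑ i, ∑ k, d i * s k * (U.map (· ^ 2))ᵀ i k
          + ∑ i, ∑ k, d i * s k * (V.map (· ^ 2))ᵀ i k) / 2 := by
        simp only [transpose_apply, map_apply, ← sum_add_distrib, sum_div]
        ring_nf
    _ ≤ (∑ i, d i * s i + ∑ i, d i * s i) / 2 := by
        gcongr (?_ + ?_) / 2 <;> exact hds.sum_mul_mul_le_sum_mul_of_mem_doublyStochastic ‹_›
    _ = ∑ i, d i * s i := by ring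

end

section
variable {R m n : Type*} [CommRing R] [Fintype m] [Fintype n]

theorem sum_sq_sub_apply (B C : Matrix m n R) :
    ∑ i, ∑ j, (B - C) i j ^ 2 =
      ∑ i, ∑ j, B i j ^ 2 - 2 * ∑ i, ∑ j, B i j * C i j + ∑ i, ∑ j, C i j ^ 2 := by
  simp only [Matrix.sub_apply, sub_sq, sum_add_distrib, sum_sub_distrib, mul_sum]
  ring_nf

theorem sum_sq_apply_eq_trace (B : Matrix m n R) : ∑ i, ∑ j, B i j ^ 2 = trace (B * Bᵀ) := by
  simp [trace, mul_apply, sq]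

theorem sum_sq_transpose_mul_mul_apply [DecidableEq m] [DecidableEq n] {U : Matrix m m R}
    {V : Matrix n n R} (hU : Uᵀ * U = 1) (hV : Vᵀ * V = 1) (B : Matrix m n R) :
    ∑ i, ∑ j, (Uᵀ * B * V) i j ^ 2 = ∑ i, ∑ j, B i j ^ 2 := by
  rw [sum_sq_apply_eq_trace, sum_sq_apply_eq_trace, transpose_mul, transpose_mul,
    transpose_transpose]
  calc trace (Uᵀ * B * V * (Vᵀ * (Bᵀ * U))) = trace (Uᵀ * (B * (V * Vᵀ) * Bᵀ * U)) := by
        simp only [Matrix.mul_assoc]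
    _ = trace (B * Bᵀ * U * Uᵀ) := by
        rw [mul_eq_one_comm.mp hV, Matrix.mul_one, trace_mul_comm]
    _ = trace (B * Bᵀ) := by rw [Matrix.mul_assoc, mul_eq_one_comm.mp hU, Matrix.mul_one]

theorem sum_diagonal_mul_apply [DecidableEq m] (d : m → R) (C : Matrix m m R) :
    ∑ i, ∑ j, diagonal d i j * C i j = ∑ i, d i * C i i := by
  simp [diagonal_apply, ite_mul]

end

theorem stmt3_general (n : ℕ)
    (d s : Fin n → ℝ)
    (hd_mono : ∀ i j : Fin n, i ≤ j → d j ≤ d i)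
    (hs_mono : ∀ i j : Fin n, i ≤ j → s j ≤ s i)
    (hd_nonneg : ∀ i, 0 ≤ d i) (hs_nonneg : ∀ i, 0 ≤ s i)
    (Q₁ Q₂ : Matrix (Fin n) (Fin n) ℝ)
    (hQ₁ : Q₁ᵀ * Q₁ = 1) (hQ₂ : Q₂ᵀ * Q₂ = 1) :
    frobN (Matrix.diagonal d - Matrix.diagonal s) ≤
      frobN (Matrix.diagonal d - Q₁ᵀ * Matrix.diagonal s * Q₂) := by
  have hds : Monovary d s := Antitone.monovary hd_mono hs_mono
  have key := hds.sum_mul_diag_transpose_mul_diagonal_mul_le hd_nonneg hs_nonneg hQ₁ hQ₂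
  unfold frobN
  apply Real.sqrt_le_sqrt
  rw [sum_sq_sub_apply, sum_sq_sub_apply, sum_sq_transpose_mul_mul_apply hQ₁ hQ₂,
    sum_diagonal_mul_apply, sum_diagonal_mul_apply]
  simp only [diagonal_apply_eq]
  linarith

/-- Key inequality in the proof of the projection theorem:
`‖D − Q₁ᵀ Σ Q₂‖_F ≥ ‖D − Σ‖_F` for diagonal `D, Σ` with nonincreasing
nonnegative entries and orthogonal `Q₁, Q₂`. -/
theorem stmt3 (n : ℕ) (hn : 1 ≤ n)
    (d s : Fin n → ℝ)
    (hd_mono : ∀ i j : Fin n, i ≤ j → d j ≤ d i)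
    (hs_mono : ∀ i j : Fin n, i ≤ j → s j ≤ s i)
    (hd_nonneg : ∀ i, 0 ≤ d i) (hs_nonneg : ∀ i, 0 ≤ s i)
    (Q₁ Q₂ : Matrix (Fin n) (Fin n) ℝ)
    (hQ₁ : Q₁ᵀ * Q₁ = 1) (hQ₂ : Q₂ᵀ * Q₂ = 1) :
    frobN (Matrix.diagonal d - Matrix.diagonal s) ≤
      frobN (Matrix.diagonal d - Q₁ᵀ * Matrix.diagonal s * Q₂) :=
  stmt3_general n d s hd_mono hs_mono hd_nonneg hs_nonneg Q₁ Q₂ hQ₁ hQ₂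
end

section
/- (Pointwise div-form gradient relation for v) Let μ = ρ + iτ be a complex number with ρ² + τ² < 1, and define the real 2×2 matrix A = (1/(1 − ρ² − τ²)) · [[(ρ−1)² + τ², −2τ], [−2τ, (1+ρ)² + τ²]]. Let uₓ, u_y, vₓ, v_y be real numbers, set a = (uₓ + v_y)/2 + i·(vₓ − u_y)/2 and b = (uₓ − v_y)/2 + i·(u_y + vₓ)/2, and suppose b = μ·a. Then A·(vₓ, v_y) = (−u_y, uₓ). -/
open Matrix Complex

/-!
Writing `μ = ρ + iτ`, the Beltrami equation `b = μ a` is a pair of real linear equations linking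
`∇u` and `∇v`. Eliminating `∇u` from them shows that the unnormalised matrix
`[[(ρ-1)² + τ², -2τ], [-2τ, (1+ρ)² + τ²]]` sends `∇v` to `(1 - |μ|²) J∇u`, where `J∇u = (-u_y, uₓ)`
is the rotated gradient; dividing by `1 - |μ|² > 0` gives the claim.
-/

theorem Complex.ofReal_add_I_mul_eq_mul_iff {p q ρ τ r s : ℝ} :
    (p + I * q : ℂ) = (ρ + I * τ) * (r + I * s) ↔ p = ρ * r - τ * s ∧ q = ρ * s + τ * r := by
  simp only [Complex.ext_iff, add_re, add_im, mul_re, mul_im, ofReal_re, ofReal_im, I_re, I_im]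
  constructor <;> rintro ⟨h₁, h₂⟩ <;> constructor <;> linarith

theorem mulVec_gradient_eq_smul_rotGradient_of_beltrami {ρ τ ux uy vx vy : ℝ}
    (h₁ : (ux - vy) / 2 = ρ * ((ux + vy) / 2) - τ * ((vx - uy) / 2))
    (h₂ : (uy + vx) / 2 = ρ * ((vx - uy) / 2) + τ * ((ux + vy) / 2)) :
    !![(ρ - 1) ^ 2 + τ ^ 2, -2 * τ; -2 * τ, (1 + ρ) ^ 2 + τ ^ 2] *ᵥ ![vx, vy] =
      (1 - ρ ^ 2 - τ ^ 2) • ![-uy, ux] := by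
  rw [mulVec_fin_two, smul_vec2]
  simp only [of_apply, cons_val_zero, cons_val_one, cons_val_fin_one, smul_eq_mul]
  congr 2
  · linear_combination (2 * τ) * h₁ + (2 * (1 - ρ)) * h₂
  · linear_combination (-2 * (1 + ρ)) * h₁ - (2 * τ) * h₂

/-- Pointwise div-form gradient relation for `v`: if `b = μ·a`, then
`A·(vₓ, v_y) = (−u_y, uₓ)`. -/
theorem stmt12 (ρ τ : ℝ) (hμ : ρ ^ 2 + τ ^ 2 < 1)
    (A : Matrix (Fin 2) (Fin 2) ℝ)
    (hA : A = (1 / (1 - ρ ^ 2 - τ ^ 2)) •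
      !![(ρ - 1) ^ 2 + τ ^ 2, -2 * τ; -2 * τ, (1 + ρ) ^ 2 + τ ^ 2])
    (ux uy vx vy : ℝ)
    (a b : ℂ)
    (ha : a = ((ux + vy) / 2 : ℝ) + Complex.I * ((vx - uy) / 2 : ℝ))
    (hb : b = ((ux - vy) / 2 : ℝ) + Complex.I * ((uy + vx) / 2 : ℝ))
    (hBeltrami : b = ((ρ : ℂ) + Complex.I * (τ : ℂ)) * a) :
    A.mulVec ![vx, vy] = ![-uy, ux] := by
  subst hA ha hb
  obtain ⟨h₁, h₂⟩ := Complex.ofReal_add_I_mul_eq_mul_iff.mp hBeltrami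
  have hd : 1 - ρ ^ 2 - τ ^ 2 ≠ 0 := by linarith
  rw [smul_mulVec, mulVec_gradient_eq_smul_rotGradient_of_beltrami h₁ h₂, smul_smul, one_div,
    inv_mul_cancel₀ hd, one_smul]
end

section
/- (Solutions of the Beltrami equation satisfy the div-form elliptic equation) Let u, v : ℝ² → ℝ be twice continuously differentiable and let ρ, τ : ℝ² → ℝ be functions with ρ(x)² + τ(x)² < 1 for every x. For each x define A(x) = (1/(1 − ρ(x)² − τ(x)²)) · [[(ρ(x)−1)² + τ(x)², −2τ(x)], [−2τ(x), (1+ρ(x))² + τ(x)²]]. Suppose that at every point the Beltrami equation holds: (uₓ − v_y)/2 + i·(u_y + vₓ)/2 = (ρ + iτ)·((uₓ + v_y)/2 + i·(vₓ − u_y)/2). Then the vector field x ↦ A(x)·∇u(x) is divergence-free at every point, i.e. ∂ₓ(A∇u)₁ + ∂_y(A∇u)₂ = 0, and likewise x ↦ A(x)·∇v(x) is divergence-free. -/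
open Matrix Complex

/-- Partial derivative in the first coordinate direction. -/
noncomputable def pdx (f : ℝ × ℝ → ℝ) (p : ℝ × ℝ) : ℝ :=
  fderiv ℝ f p (1, 0)

/-- Partial derivative in the second coordinate direction. -/
noncomputable def pdy (f : ℝ × ℝ → ℝ) (p : ℝ × ℝ) : ℝ :=
  fderiv ℝ f p (0, 1)

/-- The coefficient matrix of the div-form elliptic equation associated to the
Beltrami coefficient `μ = ρ + iτ`. -/
noncomputable def coeffA (ρ τ : ℝ) : Matrix (Fin 2) (Fin 2) ℝ :=
  (1 / (1 - ρ ^ 2 - τ ^ 2)) •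
    !![(ρ - 1) ^ 2 + τ ^ 2, -2 * τ; -2 * τ, (1 + ρ) ^ 2 + τ ^ 2]

/-!
The Beltrami equation is, in real and imaginary parts, a pair of linear relations between
`∇u` and `∇v`. Solving them shows that `A∇u = (v_y, -v_x)` and `A∇v = (-u_y, u_x)`: both fields
are rotated gradients, whose divergence vanishes by the symmetry of second derivatives.
-/

theorem pdx_pdy_comm {f : ℝ × ℝ → ℝ} {p : ℝ × ℝ} (hf : ContDiffAt ℝ 2 f p) :
    pdx (pdy f) p = pdy (pdx f) p := by
  have hf' : DifferentiableAt ℝ (fderiv ℝ f) p :=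
    (hf.fderiv_right (m := 1) (by norm_num)).differentiableAt one_ne_zero
  have hsymm := hf.isSymmSndFDerivAt (by simp) (1, 0) (0, 1)
  unfold pdx pdy
  rw [fderiv_clm_apply hf' (differentiableAt_const _),
    fderiv_clm_apply hf' (differentiableAt_const _)]
  simpa using hsymm

theorem pdx_neg (f : ℝ × ℝ → ℝ) (p : ℝ × ℝ) : pdx (fun q => -f q) p = -pdx f p := by
  simp [pdx, fderiv_fun_neg]

theorem pdy_neg (f : ℝ × ℝ → ℝ) (p : ℝ × ℝ) : pdy (fun q => -f q) p = -pdy f p := by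
  simp [pdy, fderiv_fun_neg]

theorem beltrami_re_im {ρ τ ux uy vx vy : ℝ}
    (h : (((ux - vy) / 2 : ℝ) + I * ((uy + vx) / 2 : ℝ) : ℂ) =
      ((ρ : ℂ) + I * (τ : ℂ)) * (((ux + vy) / 2 : ℝ) + I * ((vx - uy) / 2 : ℝ))) :
    ux - vy = ρ * (ux + vy) - τ * (vx - uy) ∧ uy + vx = ρ * (vx - uy) + τ * (ux + vy) := by
  have hre : (ux - vy) / 2 = ρ * ((ux + vy) / 2) - τ * ((vx - uy) / 2) := by
    simpa using congrArg re h
  have him : (uy + vx) / 2 = ρ * ((vx - uy) / 2) + τ * ((ux + vy) / 2) := by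
    simpa using congrArg im h
  constructor <;> linarith

theorem coeffA_mulVec (ρ τ a b : ℝ) : coeffA ρ τ *ᵥ ![a, b] =
    (1 - ρ ^ 2 - τ ^ 2)⁻¹ • ![((ρ - 1) ^ 2 + τ ^ 2) * a - 2 * τ * b,
      -2 * τ * a + ((1 + ρ) ^ 2 + τ ^ 2) * b] := by
  ext i
  fin_cases i <;> simp only [coeffA, mulVec, dotProduct, Fin.sum_univ_two, Matrix.smul_apply,
    of_apply, cons_val', cons_val_zero, cons_val_one, cons_val_fin_one, smul_eq_mul,
    Pi.smul_apply, Fin.zero_eta, Fin.mk_one, Fin.isValue] <;> ring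

theorem coeffA_mulVec_of_beltrami {ρ τ ux uy vx vy : ℝ} (hμ : ρ ^ 2 + τ ^ 2 < 1)
    (h : ux - vy = ρ * (ux + vy) - τ * (vx - uy) ∧ uy + vx = ρ * (vx - uy) + τ * (ux + vy)) :
    coeffA ρ τ *ᵥ ![ux, uy] = ![vy, -vx] ∧ coeffA ρ τ *ᵥ ![vx, vy] = ![-uy, ux] := by
  obtain ⟨h1, h2⟩ := h
  have hD : 1 - ρ ^ 2 - τ ^ 2 ≠ 0 := by linarith
  simp only [coeffA_mulVec]
  constructor <;> ext i <;> fin_cases i <;>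
    simp only [Fin.zero_eta, Fin.mk_one, Fin.isValue, Pi.smul_apply, cons_val_zero,
      cons_val_one, cons_val_fin_one, smul_eq_mul] <;> field_simp
  · linear_combination (1 - ρ) * h1 - τ * h2
  · linear_combination -τ * h1 + (1 + ρ) * h2
  · linear_combination τ * h1 + (1 - ρ) * h2
  · linear_combination -(1 + ρ) * h1 - τ * h2

/-- Solutions of the Beltrami equation satisfy the div-form elliptic
equations: the vector fields `A∇u` and `A∇v` are divergence-free. -/
theorem stmt13 (u v : ℝ × ℝ → ℝ)
    (hu : ContDiff ℝ 2 u) (hv : ContDiff ℝ 2 v)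
    (ρ τ : ℝ × ℝ → ℝ) (hμ : ∀ p : ℝ × ℝ, (ρ p) ^ 2 + (τ p) ^ 2 < 1)
    (hBeltrami : ∀ p : ℝ × ℝ,
      (((pdx u p - pdy v p) / 2 : ℝ) + Complex.I * ((pdy u p + pdx v p) / 2 : ℝ)) =
        ((ρ p : ℂ) + Complex.I * (τ p : ℂ)) *
          (((pdx u p + pdy v p) / 2 : ℝ) + Complex.I * ((pdx v p - pdy u p) / 2 : ℝ))) :
    (∀ p : ℝ × ℝ,
      pdx (fun q => (coeffA (ρ q) (τ q)).mulVec ![pdx u q, pdy u q] 0) p +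
        pdy (fun q => (coeffA (ρ q) (τ q)).mulVec ![pdx u q, pdy u q] 1) p = 0) ∧
    (∀ p : ℝ × ℝ,
      pdx (fun q => (coeffA (ρ q) (τ q)).mulVec ![pdx v q, pdy v q] 0) p +
        pdy (fun q => (coeffA (ρ q) (τ q)).mulVec ![pdx v q, pdy v q] 1) p = 0) := by
  have hA q := coeffA_mulVec_of_beltrami (hμ q) (beltrami_re_im (hBeltrami q))
  have hAu q : coeffA (ρ q) (τ q) *ᵥ ![pdx u q, pdy u q] = ![pdy v q, -pdx v q] := (hA q).1
  have hAv q : coeffA (ρ q) (τ q) *ᵥ ![pdx v q, pdy v q] = ![-pdy u q, pdx u q] := (hA q).2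
  refine ⟨fun p => ?_, fun p => ?_⟩
  · simp only [hAu, cons_val_zero, cons_val_one, pdy_neg, pdx_pdy_comm hv.contDiffAt]
    ring
  · simp only [hAv, cons_val_zero, cons_val_one, pdx_neg, pdx_pdy_comm hu.contDiffAt]
    ring
end
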